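/- In the CK graph CK(r, g) with g ≥ 2, if w_B < 2·w_A and (g−1)·w_B > 2·w_A, then the weights of the maximal independent sets take exactly three values ordered as 2g·w_A > g·w_B > 2·w_A + w_B; in particular the r^g one-vertex-per-clique selections S_f are precisely the maximal independent sets attaining the second-largest weight g·w_B. -/

import Mathlib

open Finset

/-- Vertex type of the CK graph `CK(r,g)`: `V_A` = `g` groups of 2 vertices (left),
`V_B` = `g` cliques of `r` vertices (right). -/
abbrev CKV (r g : ℕ) := (Fin g × Fin 2) ⊕ (Fin g × Fin r)

/-- The CK graph `CK(r,g)`: no edges inside `V_A`; each `r`-clique of `V_B` is complete;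
a vertex of group `k` of `V_A` is adjacent to every vertex of every clique of `V_B`
except clique `k`; no edges between distinct cliques of `V_B`. -/
def CKGraph (r g : ℕ) : SimpleGraph (CKV r g) where
  Adj u v :=
    match u, v with
    | Sum.inl _, Sum.inl _ => False
    | Sum.inl a, Sum.inr b => a.1 ≠ b.1
    | Sum.inr a, Sum.inl b => b.1 ≠ a.1
    | Sum.inr a, Sum.inr b => a.1 = b.1 ∧ a.2 ≠ b.2
  symm := by
    constructor
    rintro (⟨k, a⟩ | ⟨k, a⟩) (⟨l, b⟩ | ⟨l, b⟩) h
    · exact h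
    · exact h
    · exact h
    · exact ⟨h.1.symm, h.2.symm⟩
  loopless := by
    constructor
    rintro (⟨k, a⟩ | ⟨k, a⟩) h
    · exact h
    · exact h.2 rfl

/-- `S` is an independent set of `CK(r,g)`. -/
def CKIndep {r g : ℕ} (S : Finset (CKV r g)) : Prop :=
  ∀ u ∈ S, ∀ v ∈ S, ¬ (CKGraph r g).Adj u v

/-- `S` is a maximal independent set of `CK(r,g)`. -/
def CKMaxIndep {r g : ℕ} (S : Finset (CKV r g)) : Prop :=
  CKIndep S ∧ ∀ v : CKV r g, CKIndep (insert v S) → v ∈ S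

/-- The total weight of `S`, where `V_A`-vertices weigh `wA` and `V_B`-vertices weigh `wB`. -/
def CKwt {r g : ℕ} (wA wB : ℝ) (S : Finset (CKV r g)) : ℝ :=
  ∑ v ∈ S, Sum.elim (fun _ => wA) (fun _ => wB) v

/-- The set `V_A` of the CK graph, as a `Finset`. -/
def VA (r g : ℕ) : Finset (CKV r g) :=
  (Finset.univ : Finset (Fin g × Fin 2)).image Sum.inl

/-- For `f : Fin g → Fin r`, the selection `S_f` consisting of the `f k`-th vertex of
clique `k` of `V_B`, for each `k`. -/
def Sf {r g : ℕ} (f : Fin g → Fin r) : Finset (CKV r g) :=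
  (Finset.univ : Finset (Fin g)).image (fun k => Sum.inr (k, f k))

/-!
A maximal independent set `S` of `CK(r,g)` is one of three kinds. If `S` meets no clique
of `V_B`, then `S = V_A`. If `S` contains a vertex of clique `k` and a vertex of `V_A`,
that vertex lies in group `k`, so `S` sits inside group `k` plus clique `k`; it then contains
exactly one vertex of clique `k` and, by maximality, both vertices of group `k`. Otherwise
`S ⊆ V_B` and maximality forces one vertex in every clique, i.e. `S = S_f`. The three kinds
weigh `2g·w_A`, `g·w_B` and `2w_A + w_B`, which the two weight inequalities separate.
-/

variable {r g : ℕ}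

namespace CKGraph

lemma not_adj_inl_inl (a b : Fin g × Fin 2) : ¬ (CKGraph r g).Adj (.inl a) (.inl b) := id

lemma adj_inl_inr (a : Fin g × Fin 2) (b : Fin g × Fin r) :
    (CKGraph r g).Adj (.inl a) (.inr b) ↔ a.1 ≠ b.1 := Iff.rfl

lemma adj_inr_inl (a : Fin g × Fin r) (b : Fin g × Fin 2) :
    (CKGraph r g).Adj (.inr a) (.inl b) ↔ b.1 ≠ a.1 := Iff.rfl

end CKGraph

open CKGraph

lemma ckIndep_insert {S : Finset (CKV r g)} {v : CKV r g} :
    CKIndep (insert v S) ↔ CKIndep S ∧ ∀ u ∈ S, ¬ (CKGraph r g).Adj v u := by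
  simp only [CKIndep, forall_mem_insert, SimpleGraph.irrefl, not_false_eq_true, true_and]
  constructor
  · rintro ⟨hv, hS⟩
    exact ⟨fun u hu => (hS u hu).2, hv⟩
  · rintro ⟨hS, hv⟩
    exact ⟨hv, fun u hu => ⟨fun h => hv u hu h.symm, hS u hu⟩⟩

lemma ckMaxIndep_iff {S : Finset (CKV r g)} :
    CKMaxIndep S ↔ CKIndep S ∧ ∀ v ∉ S, ∃ u ∈ S, (CKGraph r g).Adj v u := by
  refine and_congr_right fun hS => forall_congr' fun v => ?_
  simp only [ckIndep_insert, hS, true_and]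
  constructor
  · intro h hv
    by_contra! hadj
    exact hv (h hadj)
  · intro h hadj
    by_contra hv
    obtain ⟨u, hu, huv⟩ := h hv
    exact hadj u hu huv

namespace CKIndep

variable {S : Finset (CKV r g)}

lemma eq_of_inl_mem_of_inr_mem (hS : CKIndep S) {l m : Fin g} {a : Fin 2} {b : Fin r}
    (ha : .inl (l, a) ∈ S) (hb : .inr (m, b) ∈ S) : l = m :=
  not_not.mp (hS _ ha _ hb)

lemma eq_of_inr_mem_of_inr_mem (hS : CKIndep S) {m : Fin g} {b b' : Fin r}
    (hb : .inr (m, b) ∈ S) (hb' : .inr (m, b') ∈ S) : b = b' := by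
  by_contra h
  exact hS _ hb _ hb' ⟨rfl, h⟩

end CKIndep

def groupWithVertex (k : Fin g) (j : Fin r) : Finset (CKV r g) :=
  {.inl (k, 0), .inl (k, 1), .inr (k, j)}

@[simp] lemma inl_mem_VA (x : Fin g × Fin 2) : (.inl x : CKV r g) ∈ VA r g := by
  simp [VA]

@[simp] lemma inr_notMem_VA (y : Fin g × Fin r) : (.inr y : CKV r g) ∉ VA r g := by
  simp [VA]

@[simp] lemma inl_notMem_Sf (f : Fin g → Fin r) (x : Fin g × Fin 2) : .inl x ∉ Sf f := by
  simp [Sf]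

@[simp] lemma inr_mem_Sf {f : Fin g → Fin r} {m : Fin g} {b : Fin r} :
    .inr (m, b) ∈ Sf f ↔ f m = b := by
  simp [Sf]

@[simp] lemma inl_mem_groupWithVertex {k m : Fin g} {j : Fin r} {a : Fin 2} :
    .inl (m, a) ∈ groupWithVertex k j ↔ m = k := by
  fin_cases a <;> simp [groupWithVertex]

@[simp] lemma inr_mem_groupWithVertex {k m : Fin g} {j b : Fin r} :
    .inr (m, b) ∈ groupWithVertex k j ↔ m = k ∧ b = j := by
  simp [groupWithVertex]

lemma ckMaxIndep_VA (hg : 2 ≤ g) : CKMaxIndep (VA r g) := by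
  have := Fin.nontrivial_iff_two_le.mpr hg
  refine ckMaxIndep_iff.mpr ⟨?_, ?_⟩
  · rintro (x | y) hx (x' | y') hx'
    all_goals simp_all [not_adj_inl_inl]
  · rintro (x | ⟨m, b⟩) hv
    · exact absurd (inl_mem_VA x) hv
    · obtain ⟨k, hk⟩ := exists_ne m
      exact ⟨.inl (k, 0), inl_mem_VA _, hk⟩

lemma ckMaxIndep_Sf (hg : 2 ≤ g) (f : Fin g → Fin r) : CKMaxIndep (Sf f) := by
  have := Fin.nontrivial_iff_two_le.mpr hg
  refine ckMaxIndep_iff.mpr ⟨?_, ?_⟩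
  · rintro (x | ⟨m, b⟩) hx (x' | ⟨m', b'⟩) hx'
    all_goals simp only [inl_notMem_Sf, inr_mem_Sf] at hx hx'
    rintro ⟨rfl, hb⟩
    exact hb (hx.symm.trans hx')
  · rintro (⟨m, a⟩ | ⟨m, b⟩) hv
    · obtain ⟨k, hk⟩ := exists_ne m
      exact ⟨.inr (k, f k), inr_mem_Sf.mpr rfl, hk.symm⟩
    · exact ⟨.inr (m, f m), inr_mem_Sf.mpr rfl, rfl, fun h => hv (inr_mem_Sf.mpr h.symm)⟩

lemma ckMaxIndep_groupWithVertex (k : Fin g) (j : Fin r) :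
    CKMaxIndep (groupWithVertex k j) := by
  refine ckMaxIndep_iff.mpr ⟨?_, ?_⟩
  · rintro (⟨m, a⟩ | ⟨m, b⟩) hx (⟨m', a'⟩ | ⟨m', b'⟩) hx'
    all_goals simp_all [not_adj_inl_inl, adj_inl_inr, adj_inr_inl]
  · rintro (⟨m, a⟩ | ⟨m, b⟩) hv
    · exact ⟨.inr (k, j), inr_mem_groupWithVertex.mpr ⟨rfl, rfl⟩,
        fun h => hv (inl_mem_groupWithVertex.mpr h)⟩
    · by_cases hm : m = k
      · subst hm
        exact ⟨.inr (m, j), inr_mem_groupWithVertex.mpr ⟨rfl, rfl⟩, rfl,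
          fun h => hv (inr_mem_groupWithVertex.mpr ⟨rfl, h⟩)⟩
      · exact ⟨.inl (k, 0), inl_mem_groupWithVertex.mpr rfl, Ne.symm hm⟩

namespace CKMaxIndep

variable {S : Finset (CKV r g)}

lemma mem_of_forall_not_adj (hS : CKMaxIndep S) {v : CKV r g}
    (hv : ∀ u ∈ S, ¬ (CKGraph r g).Adj v u) : v ∈ S := by
  by_contra h
  obtain ⟨u, hu, hvu⟩ := (ckMaxIndep_iff.mp hS).2 v h
  exact hv u hu hvu

lemma eq_VA (hS : CKMaxIndep S) (hB : ∀ y, .inr y ∉ S) : S = VA r g := by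
  ext (x | y)
  · refine iff_of_true (hS.mem_of_forall_not_adj ?_) (inl_mem_VA x)
    rintro (x' | y) hu
    · exact not_adj_inl_inl x x'
    · exact absurd hu (hB y)
  · exact iff_of_false (hB y) (inr_notMem_VA y)

lemma eq_groupWithVertex (hS : CKMaxIndep S) {k : Fin g} {a : Fin 2} {j : Fin r}
    (ha : .inl (k, a) ∈ S) (hb : .inr (k, j) ∈ S) : S = groupWithVertex k j := by
  ext (⟨m, a'⟩ | ⟨m, b⟩)
  · rw [inl_mem_groupWithVertex]
    refine ⟨fun h => hS.1.eq_of_inl_mem_of_inr_mem h hb, ?_⟩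
    rintro rfl
    refine hS.mem_of_forall_not_adj ?_
    rintro (x | ⟨m', b'⟩) hu
    · exact not_adj_inl_inl _ x
    · exact not_not.mpr (hS.1.eq_of_inl_mem_of_inr_mem ha hu)
  · rw [inr_mem_groupWithVertex]
    refine ⟨fun h => ?_, ?_⟩
    · obtain rfl := (hS.1.eq_of_inl_mem_of_inr_mem ha h).symm
      exact ⟨rfl, hS.1.eq_of_inr_mem_of_inr_mem h hb⟩
    · rintro ⟨rfl, rfl⟩
      exact hb

lemma exists_eq_Sf (hS : CKMaxIndep S) (hr : 0 < r) (hA : ∀ x, .inl x ∉ S) :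
    ∃ f, S = Sf f := by
  have hclique : ∀ m, ∃ b, .inr (m, b) ∈ S := by
    intro m
    by_contra! h
    refine h ⟨0, hr⟩ (hS.mem_of_forall_not_adj ?_)
    rintro (x | ⟨m', b'⟩) hu
    · exact absurd hu (hA x)
    · rintro ⟨rfl, -⟩
      exact h b' hu
  choose f hf using hclique
  refine ⟨f, ?_⟩
  ext (x | ⟨m, b⟩)
  · exact iff_of_false (hA x) (inl_notMem_Sf f x)
  · rw [inr_mem_Sf]
    exact ⟨hS.1.eq_of_inr_mem_of_inr_mem (hf m), by rintro rfl; exact hf m⟩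

theorem eq_VA_or_exists_eq_Sf_or_exists_eq_groupWithVertex (hS : CKMaxIndep S) :
    S = VA r g ∨ (∃ f, S = Sf f) ∨ ∃ k j, S = groupWithVertex k j := by
  by_cases hB : ∃ y, .inr y ∈ S
  · obtain ⟨⟨k, j⟩, hkj⟩ := hB
    by_cases hA : ∃ x, .inl x ∈ S
    · obtain ⟨⟨l, a⟩, hla⟩ := hA
      obtain rfl := hS.1.eq_of_inl_mem_of_inr_mem hla hkj
      exact .inr (.inr ⟨l, j, hS.eq_groupWithVertex hla hkj⟩)
    · push Not at hA
      exact .inr (.inl (hS.exists_eq_Sf j.pos hA))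
  · push Not at hB
    exact .inl (hS.eq_VA hB)

end CKMaxIndep

section Weight

variable (wA wB : ℝ)

@[simp] lemma ckwt_VA : CKwt wA wB (VA r g) = 2 * g * wA := by
  rw [CKwt, VA, sum_image fun _ _ _ _ h => Sum.inl_injective h]
  simp only [Sum.elim_inl, sum_const, card_univ, Fintype.card_prod, Fintype.card_fin,
    nsmul_eq_mul]
  push_cast
  ring

@[simp] lemma ckwt_Sf (f : Fin g → Fin r) : CKwt wA wB (Sf f) = g * wB := by
  rw [CKwt, Sf, sum_image fun _ _ _ _ h => (Prod.ext_iff.mp (Sum.inr_injective h)).1]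
  simp

@[simp] lemma ckwt_groupWithVertex (k : Fin g) (j : Fin r) :
    CKwt wA wB (groupWithVertex k j) = 2 * wA + wB := by
  rw [CKwt, groupWithVertex, sum_insert (by simp), sum_insert (by simp), sum_singleton]
  simp only [Sum.elim_inl, Sum.elim_inr]
  ring

end Weight

theorem stmt11_general (r g : ℕ) (hr : 1 ≤ r) (hg : 2 ≤ g)
    (wA wB : ℝ) (h1 : wB < 2 * wA) (h2 : 2 * wA < ((g : ℝ) - 1) * wB) :
    ((2 * g * wA > g * wB ∧ g * wB > 2 * wA + wB) ∧
     (∀ S : Finset (CKV r g), CKMaxIndep S →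
        CKwt wA wB S = 2 * g * wA ∨ CKwt wA wB S = g * wB ∨
          CKwt wA wB S = 2 * wA + wB) ∧
     (∃ S : Finset (CKV r g), CKMaxIndep S ∧ CKwt wA wB S = 2 * g * wA) ∧
     (∃ S : Finset (CKV r g), CKMaxIndep S ∧ CKwt wA wB S = g * wB) ∧
     (∃ S : Finset (CKV r g), CKMaxIndep S ∧ CKwt wA wB S = 2 * wA + wB)) ∧
    (∀ S : Finset (CKV r g), CKMaxIndep S →
      (CKwt wA wB S = g * wB ↔ ∃ f : Fin g → Fin r, S = Sf f)) := by
  have hg0 : (0 : ℝ) < g := by positivity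
  have hAB : 2 * g * wA > g * wB := by nlinarith
  have hBT : g * wB > 2 * wA + wB := by linarith
  refine ⟨⟨⟨hAB, hBT⟩, fun S hS => ?_, ⟨_, ckMaxIndep_VA hg, ckwt_VA wA wB⟩,
    ⟨_, ckMaxIndep_Sf hg fun _ => ⟨0, hr⟩, ckwt_Sf wA wB _⟩,
    ⟨_, ckMaxIndep_groupWithVertex ⟨0, by omega⟩ ⟨0, hr⟩, ckwt_groupWithVertex wA wB _ _⟩⟩,
    fun S hS => ⟨fun hwt => ?_, fun ⟨f, hf⟩ => hf ▸ ckwt_Sf wA wB f⟩⟩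
  · rcases hS.eq_VA_or_exists_eq_Sf_or_exists_eq_groupWithVertex with
      rfl | ⟨f, rfl⟩ | ⟨k, j, rfl⟩ <;> simp
  · rcases hS.eq_VA_or_exists_eq_Sf_or_exists_eq_groupWithVertex with
      rfl | ⟨f, rfl⟩ | ⟨k, j, rfl⟩
    · rw [ckwt_VA] at hwt
      linarith
    · exact ⟨f, rfl⟩
    · rw [ckwt_groupWithVertex] at hwt
      linarith

theorem stmt11 (r g : ℕ) (hr : 1 ≤ r) (hg : 2 ≤ g)
    (wA wB : ℝ) (hwA : 0 < wA) (hwB : 0 < wB)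
    (h1 : wB < 2 * wA) (h2 : 2 * wA < ((g : ℝ) - 1) * wB) :
    ((2 * g * wA > g * wB ∧ g * wB > 2 * wA + wB) ∧
     (∀ S : Finset (CKV r g), CKMaxIndep S →
        CKwt wA wB S = 2 * g * wA ∨ CKwt wA wB S = g * wB ∨
          CKwt wA wB S = 2 * wA + wB) ∧
     (∃ S : Finset (CKV r g), CKMaxIndep S ∧ CKwt wA wB S = 2 * g * wA) ∧
     (∃ S : Finset (CKV r g), CKMaxIndep S ∧ CKwt wA wB S = g * wB) ∧
     (∃ S : Finset (CKV r g), CKMaxIndep S ∧ CKwt wA wB S = 2 * wA + wB)) ∧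
    (∀ S : Finset (CKV r g), CKMaxIndep S →
      (CKwt wA wB S = g * wB ↔ ∃ f : Fin g → Fin r, S = Sf f)) :=
  stmt11_general r g hr hg wA wB h1 h2
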